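/- arXiv:2104.06210 — 11 statements merged into one kernel-verified Lean document; each statement's English description precedes it below -/
import Mathlib

section
/- (Proposition 1) Suppose the jobs are indexed in EDD order, i.e., d is monotone nondecreasing (i ≤ j implies d i ≤ d j). If some job is late under the identity schedule (the EDD sequence), then under every schedule σ at least one job is late; in particular, the minimum over all schedules of the number of late jobs is at least 1. -/
/-- Completion time of job `j` under schedule `σ`. -/
def completion {n : ℕ} (p : Fin n → ℕ) (σ : Equiv.Perm (Fin n)) (j : Fin n) : ℕ :=
  ∑ i ∈ Finset.univ.filter (fun i => σ.symm i ≤ σ.symm j), p i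

/-- Number of late jobs under schedule `σ`. -/
def numLate {n : ℕ} (p d : Fin n → ℕ) (σ : Equiv.Perm (Fin n)) : ℕ :=
  (Finset.univ.filter (fun j => d j < completion p σ j)).card

/-- Proposition 1: if the jobs are in EDD order and some job is late in the EDD
sequence (the identity schedule), then every schedule has a late job; in
particular every schedule has at least one late job, so the minimum number of
late jobs is at least `1`. -/
theorem edd_late_implies_opt_pos {n : ℕ} (p d : Fin n → ℕ) (hd : Monotone d)
    (hlate : ∃ j : Fin n, d j < ∑ i ∈ Finset.univ.filter (· ≤ j), p i) :
    (∀ σ : Equiv.Perm (Fin n), ∃ j : Fin n, d j < completion p σ j) ∧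
    (∀ σ : Equiv.Perm (Fin n), 1 ≤ numLate p d σ) := by
  obtain ⟨j, hj⟩ := hlate
  have main : ∀ σ : Equiv.Perm (Fin n), ∃ k : Fin n, d k < completion p σ k := by
    intro σ
    set S : Finset (Fin n) := Finset.univ.filter (· ≤ j) with hS
    have hSne : S.Nonempty := ⟨j, by simp [hS]⟩
    obtain ⟨k, hkS, hkmax⟩ := S.exists_max_image (fun i => σ.symm i) hSne
    have hkj : k ≤ j := by simpa [hS] using hkS
    refine ⟨k, lt_of_le_of_lt (hd hkj) (lt_of_lt_of_le hj ?_)⟩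
    apply Finset.sum_le_sum_of_subset
    intro i hi
    simp only [Finset.mem_filter, Finset.mem_univ, true_and]
    exact hkmax i hi
  exact ⟨main, fun σ => by
    obtain ⟨k, hk⟩ := main σ
    exact Finset.card_pos.mpr ⟨k, by simp [numLate, hk]⟩⟩
end

section
/- Suppose the jobs are indexed in EDD order, i.e., d is monotone nondecreasing, and suppose k is a job with ∑_{i ≤ k} p_i > d k (so job k is late in the EDD sequence). Then under every schedule σ, some job j with j ≤ k is late. -/
/-- If the jobs are in EDD order and job `k` is late in the EDD sequence, then
under every schedule some job `j ≤ k` is late. -/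
theorem late_job_in_prefix {n : ℕ} (p d : Fin n → ℕ) (hd : Monotone d) (k : Fin n)
    (hk : d k < ∑ i ∈ Finset.univ.filter (· ≤ k), p i) :
    ∀ σ : Equiv.Perm (Fin n), ∃ j : Fin n, j ≤ k ∧ d j < completion p σ j := by
  intro σ
  have hS : (Finset.univ.filter (· ≤ k)).Nonempty :=
    ⟨k, by simp⟩
  obtain ⟨j, hjS, hjmax⟩ := Finset.exists_max_image _ (fun i => σ.symm i) hS
  have hjk : j ≤ k := (Finset.mem_filter.mp hjS).2
  refine ⟨j, hjk, lt_of_le_of_lt (hd hjk) (lt_of_lt_of_le hk ?_)⟩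
  apply Finset.sum_le_sum_of_subset
  intro i hi
  simp only [Finset.mem_filter, Finset.mem_univ, true_and] at *
  exact hjmax i (by simp [hi])
end

section
/- Suppose the jobs are indexed in EDD order, i.e., d is monotone nondecreasing, and let A be a subset of the jobs. If there exists a schedule σ under which every job of A is on time (not late), then scheduling the jobs of A first, in increasing index order, makes every job of A on time; that is, for every j ∈ A one has ∑_{i ∈ A, i ≤ j} p_i ≤ d j. -/
/-- If the jobs are in EDD order and some schedule makes every job of `A` on
time, then scheduling the jobs of `A` first in increasing index order makes
every job of `A` on time. -/
theorem edd_subset_on_time {n : ℕ} (p d : Fin n → ℕ) (hd : Monotone d)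
    (A : Finset (Fin n))
    (h : ∃ σ : Equiv.Perm (Fin n), ∀ j ∈ A, completion p σ j ≤ d j) :
    ∀ j ∈ A, ∑ i ∈ A.filter (· ≤ j), p i ≤ d j := by
  obtain ⟨σ, hσ⟩ := h
  intro j hj
  set S := A.filter (· ≤ j) with hS
  have hjS : j ∈ S := by simp [hS, hj]
  obtain ⟨k, hkS, hk⟩ := S.exists_max_image (fun i => σ.symm i) ⟨j, hjS⟩
  have hkA : k ∈ A := (Finset.mem_filter.mp hkS).1
  have hkj : k ≤ j := (Finset.mem_filter.mp hkS).2
  calc ∑ i ∈ S, p i ≤ completion p σ k := by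
        apply Finset.sum_le_sum_of_subset
        intro i hi
        simp only [Finset.mem_filter, Finset.mem_univ, true_and]
        exact hk i hi
    _ ≤ d k := hσ k hkA
    _ ≤ d j := hd hkj
end

section
/- Suppose the jobs are indexed in EDD order, i.e., d is monotone nondecreasing. For every schedule σ there exists a schedule σ' with the same number of late jobs such that, under σ', all on-time jobs are scheduled before all late jobs, and the on-time jobs appear in increasing index order. In particular, there is an optimal schedule (one minimizing the number of late jobs) of this form. -/
/-- If the jobs are in EDD order, every schedule can be transformed, without
changing the number of late jobs, into one where all on-time jobs precede all
late jobs and the on-time jobs appear in increasing index order; in particular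
there is an optimal schedule of this form. -/
theorem exists_normal_form_schedule {n : ℕ} (p d : Fin n → ℕ) (hd : Monotone d) :
    (∀ σ : Equiv.Perm (Fin n), ∃ σ' : Equiv.Perm (Fin n),
      numLate p d σ' = numLate p d σ ∧
      (∀ i j : Fin n, completion p σ' i ≤ d i → d j < completion p σ' j →
        σ'.symm i < σ'.symm j) ∧
      (∀ i j : Fin n, completion p σ' i ≤ d i → completion p σ' j ≤ d j → i < j →
        σ'.symm i < σ'.symm j)) ∧
    (∃ σ' : Equiv.Perm (Fin n),
      (∀ τ : Equiv.Perm (Fin n), numLate p d σ' ≤ numLate p d τ) ∧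
      (∀ i j : Fin n, completion p σ' i ≤ d i → d j < completion p σ' j →
        σ'.symm i < σ'.symm j) ∧
      (∀ i j : Fin n, completion p σ' i ≤ d i → completion p σ' j ≤ d j → i < j →
        σ'.symm i < σ'.symm j)) := by
  classical
  have main : ∀ σ : Equiv.Perm (Fin n), ∃ σ' : Equiv.Perm (Fin n),
      numLate p d σ' = numLate p d σ ∧
      (∀ i j : Fin n, completion p σ' i ≤ d i → d j < completion p σ' j →
        σ'.symm i < σ'.symm j) ∧
      (∀ i j : Fin n, completion p σ' i ≤ d i → completion p σ' j ≤ d j → i < j →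
        σ'.symm i < σ'.symm j) := by
    intro σ
    set S : Finset (Fin n) := Finset.univ.filter (fun j => completion p σ j ≤ d j) with hSdef
    set f : Fin n → Lex (ℕ × ℕ) :=
      (fun j => toLex (if j ∈ S then ((0:ℕ), (j:ℕ)) else (1, ((σ.symm j : Fin n) : ℕ)))) with hf
    set σ' := Tuple.sort f with hσ'
    have hmono : Monotone (f ∘ σ') := Tuple.monotone_sort f
    have finj : Function.Injective f := by
      intro i j h
      have h' := toLex.injective h
      by_cases hi : i ∈ S <;> by_cases hj : j ∈ S <;> simp [hi, hj, Prod.ext_iff] at h'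
      · exact Fin.val_injective h'
      · exact σ.symm.injective (Fin.val_injective h')
    have hlt : ∀ i j : Fin n, f i < f j → σ'.symm i < σ'.symm j := by
      intro i j hij
      by_contra h
      push_neg at h
      have := hmono h
      simp only [Function.comp_apply, Equiv.apply_symm_apply] at this
      exact absurd this (not_le.mpr hij)
    have hle : ∀ i j : Fin n, σ'.symm i ≤ σ'.symm j ↔ f i ≤ f j := by
      intro i j
      constructor
      · intro h
        have := hmono h
        simpa using this
      · intro h
        rcases lt_or_eq_of_le h with h' | h'
        · exact (hlt i j h').le
        · exact le_of_eq (by rw [finj h'])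
    have hcomp : ∀ j, completion p σ' j
        = ∑ i ∈ Finset.univ.filter (fun i => f i ≤ f j), p i := by
      intro j
      unfold completion
      congr 1
      apply Finset.filter_congr
      intro i _
      simpa using hle i j
    have hA : ∀ j ∈ S, completion p σ' j ≤ d j := by
      intro j hj
      have h1 : completion p σ' j = ∑ i ∈ S.filter (fun i => i ≤ j), p i := by
        rw [hcomp]
        congr 1
        ext i
        simp only [Finset.mem_filter, Finset.mem_univ, true_and]
        constructor
        · intro hle'
          by_cases hiS : i ∈ S
          · simp only [hf, hiS, hj, if_pos, Prod.Lex.le_iff] at hle'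
            rcases hle' with h' | ⟨-, h'⟩
            · exact absurd h' (lt_irrefl 0)
            · exact ⟨hiS, Fin.le_def.mpr h'⟩
          · exfalso
            simp [hf, hiS, hj, Prod.Lex.le_iff] at hle' <;> omega
        · rintro ⟨hiS, hij⟩
          simp [hf, hiS, hj, Prod.Lex.le_iff] <;> omega
      have hTne : (S.filter (fun i => i ≤ j)).Nonempty := ⟨j, by simp [hj]⟩
      obtain ⟨k, hk, hmax⟩ :=
        Finset.exists_max_image (S.filter (fun i => i ≤ j)) (fun i => σ.symm i) hTne
      have hkS : k ∈ S := (Finset.mem_filter.mp hk).1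
      have hkj : k ≤ j := (Finset.mem_filter.mp hk).2
      have h2 : ∑ i ∈ S.filter (fun i => i ≤ j), p i ≤ completion p σ k := by
        unfold completion
        apply Finset.sum_le_sum_of_subset
        intro i hi
        simp only [Finset.mem_filter, Finset.mem_univ, true_and]
        exact hmax i hi
      have h3 : completion p σ k ≤ d k := by
        have := Finset.mem_filter.mp hkS
        exact this.2
      have h4 : d k ≤ d j := hd hkj
      omega
    have hB : ∀ j ∉ S, completion p σ j ≤ completion p σ' j := by
      intro j hj
      rw [hcomp]
      unfold completion
      apply Finset.sum_le_sum_of_subset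
      intro i hi
      simp only [Finset.mem_filter, Finset.mem_univ, true_and] at hi ⊢
      by_cases hiS : i ∈ S
      · simp [hf, hiS, hj, Prod.Lex.le_iff] <;> omega
      · simp [hf, hiS, hj, Prod.Lex.le_iff] <;> omega
    have hmemS : ∀ j, j ∈ S ↔ completion p σ j ≤ d j := by
      intro j; simp [hSdef]
    have hS' : ∀ j, completion p σ' j ≤ d j ↔ j ∈ S := by
      intro j
      constructor
      · intro h
        by_contra hjS
        have h1 := hB j hjS
        have h2 : d j < completion p σ j := lt_of_not_ge (fun hc => hjS ((hmemS j).mpr hc))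
        omega
      · exact hA j
    have hnum : numLate p d σ' = numLate p d σ := by
      unfold numLate
      congr 1
      ext j
      simp only [Finset.mem_filter, Finset.mem_univ, true_and]
      rw [← not_le, ← not_le]
      rw [not_iff_not, hS' j, hmemS j]
    refine ⟨σ', hnum, ?_, ?_⟩
    · intro i j hi hj
      have hiS : i ∈ S := (hS' i).mp hi
      have hjS : j ∉ S := fun h => absurd ((hS' j).mpr h) (not_le.mpr hj)
      apply hlt
      simp [hf, hiS, hjS, Prod.Lex.lt_iff] <;> omega
    · intro i j hi hj hij
      have hiS : i ∈ S := (hS' i).mp hi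
      have hjS : j ∈ S := (hS' j).mp hj
      apply hlt
      simp [hf, hiS, hjS, Prod.Lex.lt_iff] <;> omega
  refine ⟨main, ?_⟩
  obtain ⟨σ₀, -, hmin⟩ :=
    Finset.exists_min_image Finset.univ (numLate p d) ⟨1, Finset.mem_univ 1⟩
  obtain ⟨σ', hnum, h1, h2⟩ := main σ₀
  exact ⟨σ', fun τ => hnum ▸ hmin τ (Finset.mem_univ τ), h1, h2⟩
end

section
/- Suppose the jobs are indexed in EDD order, i.e., d is monotone nondecreasing, and suppose k is the first late job of the EDD sequence: ∑_{i ≤ j} p_i ≤ d j for all j < k, and ∑_{i ≤ k} p_i > d k. Let m ≤ k be a job with p_m = max_{i ≤ k} p_i. Then ∑_{i ≤ k, i ≠ m} p_i ≤ ∑_{i < k} p_i ≤ d k; in particular, job k completes on time if all jobs of {0,…,k} except m are scheduled first in increasing index order. -/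
/-- If the jobs are in EDD order, `k` is the first late job of the EDD sequence,
and `m ≤ k` has maximum processing time among the jobs `i ≤ k`, then the total
processing time of the jobs `i ≤ k` other than `m` is at most `∑_{i < k} p i`,
which in turn is at most `d k`; so job `k` completes on time when the jobs of
`{0,…,k} \ {m}` are scheduled first in increasing index order. -/
theorem prefix_without_max_on_time {n : ℕ} (p d : Fin n → ℕ) (hd : Monotone d)
    (k : Fin n)
    (hfirst : ∀ j : Fin n, j < k → ∑ i ∈ Finset.univ.filter (· ≤ j), p i ≤ d j)
    (hk : d k < ∑ i ∈ Finset.univ.filter (· ≤ k), p i)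
    (m : Fin n) (hmk : m ≤ k) (hmax : ∀ i : Fin n, i ≤ k → p i ≤ p m) :
    ∑ i ∈ Finset.univ.filter (fun i => i ≤ k ∧ i ≠ m), p i ≤
      ∑ i ∈ Finset.univ.filter (· < k), p i ∧
    ∑ i ∈ Finset.univ.filter (· < k), p i ≤ d k := by
  set A := Finset.univ.filter (· ≤ k) with hA
  set B := Finset.univ.filter (· < k : Fin n → Prop) with hB
  have hmA : m ∈ A := by simp [hA, hmk]
  have hset : Finset.univ.filter (fun i : Fin n => i ≤ k ∧ i ≠ m) = A.erase m := by
    ext i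
    simp [hA, Finset.mem_erase, and_comm]
  have hAB : A = insert k B := by
    ext i
    simp only [hA, hB, Finset.mem_filter, Finset.mem_insert, Finset.mem_univ, true_and]
    constructor
    · intro h
      rcases lt_or_eq_of_le h with h | h
      · exact Or.inr h
      · exact Or.inl h
    · rintro (h | h) <;> simp [h, le_of_lt]
  have hkB : k ∉ B := by simp [hB]
  have h2 : ∑ i ∈ A, p i = p k + ∑ i ∈ B, p i := by
    rw [hAB, Finset.sum_insert hkB]
  have h1 : ∑ i ∈ A.erase m, p i + p m = ∑ i ∈ A, p i :=
    Finset.sum_erase_add _ _ hmA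
  have hpk : p k ≤ p m := hmax k le_rfl
  constructor
  · rw [hset]; omega
  · rcases Nat.eq_zero_or_pos k.val with h0 | h0
    · have : B = ∅ := by
        ext i
        simp only [hB, Finset.mem_filter, Finset.mem_univ, true_and, Finset.notMem_empty,
          iff_false]
        intro hi
        exact absurd (Fin.lt_def.mp hi) (by omega)
      simp [this]
    · have hkn : k.val - 1 < n := by omega
      set j : Fin n := ⟨k.val - 1, hkn⟩ with hj
      have hjk : j < k := by simp [hj, Fin.lt_def]; omega
      have hBj : B = Finset.univ.filter (· ≤ j) := by
        ext i
        simp only [hB, Finset.mem_filter, Finset.mem_univ, true_and]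
        rw [Fin.lt_def, Fin.le_def]
        simp [hj]; omega
      calc ∑ i ∈ B, p i ≤ d j := by rw [hBj]; exact hfirst j hjk
        _ ≤ d k := hd (le_of_lt hjk)
end

section
/- (Swap claim from the proof of Lemma 1) Suppose the jobs are indexed in EDD order, i.e., d is monotone nondecreasing, and suppose k is the first late job of the EDD sequence: ∑_{i ≤ j} p_i ≤ d j for all j < k, and ∑_{i ≤ k} p_i > d k. Let m ≤ k be a job with p_m = max_{i ≤ k} p_i. Let A be a subset of jobs with m ∈ A such that every job of A is on time when the jobs of A are scheduled first in increasing index order (i.e., ∑_{i ∈ A, i ≤ j} p_i ≤ d j for all j ∈ A), and let r ∉ A be a job with r ≤ k and r ≠ m. Then for A' = (A \ {m}) ∪ {r}, every job of A' is on time when the jobs of A' are scheduled first in increasing index order: ∑_{i ∈ A', i ≤ j} p_i ≤ d j for all j ∈ A'. -/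
/-- Swap claim from the proof of Lemma 1: if every job of `A` is on time when the
jobs of `A` are scheduled first in increasing index order, `m ∈ A` has maximum
processing time among the jobs `i ≤ k` (where `k` is the first late job of the
EDD sequence), and `r ∉ A` is a job with `r ≤ k`, `r ≠ m`, then every job of
`A' = (A \ {m}) ∪ {r}` is on time when the jobs of `A'` are scheduled first in
increasing index order. -/
theorem swap_keeps_on_time {n : ℕ} (p d : Fin n → ℕ) (hd : Monotone d)
    (k : Fin n)
    (hfirst : ∀ j : Fin n, j < k → ∑ i ∈ Finset.univ.filter (· ≤ j), p i ≤ d j)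
    (hk : d k < ∑ i ∈ Finset.univ.filter (· ≤ k), p i)
    (m : Fin n) (hmk : m ≤ k) (hmax : ∀ i : Fin n, i ≤ k → p i ≤ p m)
    (A : Finset (Fin n)) (hmA : m ∈ A)
    (hA : ∀ j ∈ A, ∑ i ∈ A.filter (· ≤ j), p i ≤ d j)
    (r : Fin n) (hrA : r ∉ A) (hrk : r ≤ k) (hrm : r ≠ m) :
    ∀ j ∈ insert r (A.erase m),
      ∑ i ∈ (insert r (A.erase m)).filter (· ≤ j), p i ≤ d j := by
  intro j hj
  have hprm : p r ≤ p m := hmax r hrk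
  by_cases hjk : j < k
  · calc ∑ i ∈ (insert r (A.erase m)).filter (· ≤ j), p i
        ≤ ∑ i ∈ Finset.univ.filter (· ≤ j), p i := by
          apply Finset.sum_le_sum_of_subset
          intro x hx
          simp only [Finset.mem_filter] at hx ⊢
          exact ⟨Finset.mem_univ x, hx.2⟩
      _ ≤ d j := hfirst j hjk
  · push_neg at hjk
    have hmj : m ≤ j := le_trans hmk hjk
    have hrj : r ≤ j := le_trans hrk hjk
    have hmem : m ∈ A.filter (· ≤ j) := Finset.mem_filter.mpr ⟨hmA, hmj⟩
    have hrnot : r ∉ (A.erase m).filter (· ≤ j) := by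
      simp only [Finset.mem_filter, Finset.mem_erase]
      rintro ⟨⟨-, h⟩, -⟩
      exact hrA h
    have hsum : ∑ i ∈ (insert r (A.erase m)).filter (· ≤ j), p i
        = p r + ∑ i ∈ (A.erase m).filter (· ≤ j), p i := by
      rw [Finset.filter_insert, if_pos hrj, Finset.sum_insert hrnot]
    have hsum2 : ∑ i ∈ A.filter (· ≤ j), p i
        = p m + ∑ i ∈ (A.erase m).filter (· ≤ j), p i := by
      rw [Finset.filter_erase, ← Finset.add_sum_erase _ _ hmem]
    have key : ∑ i ∈ (insert r (A.erase m)).filter (· ≤ j), p i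
        ≤ ∑ i ∈ A.filter (· ≤ j), p i := by
      rw [hsum, hsum2]; exact Nat.add_le_add_right hprm _
    have hAk : ∑ i ∈ A.filter (· ≤ k), p i ≤ d k := by
      have hne : (A.filter (· ≤ k)).Nonempty :=
        ⟨m, Finset.mem_filter.mpr ⟨hmA, hmk⟩⟩
      obtain ⟨t, htmax⟩ := Finset.max_of_nonempty hne
      have htmem : t ∈ A.filter (· ≤ k) := Finset.mem_of_max htmax
      rw [Finset.mem_filter] at htmem
      have heq : A.filter (· ≤ k) = A.filter (· ≤ t) := by
        ext x
        simp only [Finset.mem_filter]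
        constructor
        · rintro ⟨hxA, hxk⟩
          have hx' : x ∈ A.filter (· ≤ k) := Finset.mem_filter.mpr ⟨hxA, hxk⟩
          exact ⟨hxA, Finset.le_max_of_eq hx' htmax⟩
        · rintro ⟨hxA, hxt⟩
          exact ⟨hxA, le_trans hxt htmem.2⟩
      rw [heq]
      exact le_trans (hA t htmem.1) (hd htmem.2)
    rcases Finset.mem_insert.mp hj with hjr | hjA
    · subst hjr
      have hjk' : j = k := le_antisymm hrk hjk
      subst hjk'
      exact key.trans hAk
    · exact key.trans (hA j (Finset.mem_of_mem_erase hjA))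
end

section
/- (Lemma 1) Suppose the jobs are indexed in EDD order, i.e., d is monotone nondecreasing, and suppose k is the first late job of the EDD sequence: ∑_{i ≤ j} p_i ≤ d j for all j < k, and ∑_{i ≤ k} p_i > d k. Let m ≤ k be a job with p_m = max_{i ≤ k} p_i. Then there exists a schedule σ that minimizes the number of late jobs (over all schedules) and in which job m is late. -/
/-- A set `T` of jobs is EDD-feasible if the prefix sums of processing times of
jobs of `T` (in index order) never exceed the due dates. -/
def feasible {n : ℕ} (p d : Fin n → ℕ) (T : Finset (Fin n)) : Prop :=
  ∀ i : Fin n, ∑ i' ∈ T.filter (· ≤ i), p i' ≤ d i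

/-- The set of on-time jobs under schedule `σ`. -/
def ontime {n : ℕ} (p d : Fin n → ℕ) (σ : Equiv.Perm (Fin n)) : Finset (Fin n) :=
  Finset.univ.filter (fun j => completion p σ j ≤ d j)

lemma ontime_feasible {n : ℕ} (p d : Fin n → ℕ) (hd : Monotone d)
    (σ : Equiv.Perm (Fin n)) : feasible p d (ontime p d σ) := by
  intro i
  rcases ((ontime p d σ).filter (· ≤ i)).eq_empty_or_nonempty with h | h
  · simp [h]
  · obtain ⟨w, hw, hwmax⟩ :=
      ((ontime p d σ).filter (· ≤ i)).exists_max_image (fun x => σ.symm x) h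
    have hsub : (ontime p d σ).filter (· ≤ i) ⊆
        Finset.univ.filter (fun x => σ.symm x ≤ σ.symm w) := by
      intro x hx
      simp only [Finset.mem_filter, Finset.mem_univ, true_and]
      exact hwmax x hx
    have hw' := Finset.mem_filter.mp hw
    have hw2 := Finset.mem_filter.mp hw'.1
    calc ∑ i' ∈ (ontime p d σ).filter (· ≤ i), p i'
        ≤ completion p σ w := Finset.sum_le_sum_of_subset hsub
      _ ≤ d w := hw2.2
      _ ≤ d i := hd hw'.2

lemma numLate_add_ontime {n : ℕ} (p d : Fin n → ℕ) (σ : Equiv.Perm (Fin n)) :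
    numLate p d σ + (ontime p d σ).card = n := by
  have h := Finset.card_filter_add_card_filter_not
    (s := (Finset.univ : Finset (Fin n))) (p := fun j => d j < completion p σ j)
  rw [numLate, ontime]
  have h2 : (Finset.univ.filter (fun j => ¬ d j < completion p σ j)) =
      (Finset.univ.filter (fun j => completion p σ j ≤ d j)) := by
    apply Finset.filter_congr; intro x _; simp [not_lt]
  rw [h2] at h
  simpa using h

/-- Given any set `T`, there is a schedule placing the jobs of `T` first in
index order, so that the completion time of each `j ∈ T` is the prefix sum
over `T`. -/
lemma exists_schedule {n : ℕ} (p : Fin n → ℕ) (T : Finset (Fin n)) :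
    ∃ σ : Equiv.Perm (Fin n), ∀ j ∈ T,
      completion p σ j = ∑ i' ∈ T.filter (· ≤ j), p i' := by
  classical
  set K : Fin n → ℕ := fun j => (if j ∈ T then 0 else n) + j with hK
  have hKinj : Function.Injective K := by
    intro a b hab
    have ha' := a.isLt
    have hb' := b.isLt
    simp only [hK] at hab
    by_cases ha : a ∈ T <;> by_cases hb : b ∈ T <;>
      simp only [ha, hb, if_pos, if_neg, if_true, if_false] at hab <;>
      · apply Fin.ext; omega
  set σ : Equiv.Perm (Fin n) := Tuple.sort K with hσdef
  have hs : StrictMono (K ∘ σ) :=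
    (Tuple.monotone_sort K).strictMono_of_injective (hKinj.comp σ.injective)
  have hiff : ∀ i j : Fin n, (σ.symm i ≤ σ.symm j ↔ K i ≤ K j) := by
    intro i j
    have := hs.le_iff_le (a := σ.symm i) (b := σ.symm j)
    simpa using this.symm
  refine ⟨σ, fun j hj => ?_⟩
  have hfil : Finset.univ.filter (fun i => σ.symm i ≤ σ.symm j) = T.filter (· ≤ j) := by
    ext x
    have hx' := x.isLt
    have hj' := j.isLt
    simp only [Finset.mem_filter, Finset.mem_univ, true_and, hiff]
    by_cases hx : x ∈ T
    · simp only [hK, hx, hj, if_true, true_and]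
      rw [Fin.le_def]; omega
    · simp only [hK, hx, hj, if_true, if_false, false_and, iff_false, not_le]
      omega
  rw [completion, hfil]

/-- Lemma 1: if the jobs are in EDD order, `k` is the first late job of the EDD
sequence, and `m ≤ k` has maximum processing time among the jobs `i ≤ k`, then
there is an optimal schedule in which job `m` is late. -/
theorem exists_optimal_rejecting_max {n : ℕ} (p d : Fin n → ℕ) (hd : Monotone d)
    (k : Fin n)
    (hfirst : ∀ j : Fin n, j < k → ∑ i ∈ Finset.univ.filter (· ≤ j), p i ≤ d j)
    (hk : d k < ∑ i ∈ Finset.univ.filter (· ≤ k), p i)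
    (m : Fin n) (hmk : m ≤ k) (hmax : ∀ i : Fin n, i ≤ k → p i ≤ p m) :
    ∃ σ : Equiv.Perm (Fin n),
      (∀ τ : Equiv.Perm (Fin n), numLate p d σ ≤ numLate p d τ) ∧
      d m < completion p σ m := by
  classical
  -- a maximum-cardinality feasible set
  have hfeas_empty : feasible p d (∅ : Finset (Fin n)) := by
    intro i; simp
  obtain ⟨T, hTmem, hTmax⟩ := Finset.exists_max_image
    ((Finset.univ : Finset (Finset (Fin n))).filter (fun U => feasible p d U))
    Finset.card ⟨∅, by simp [hfeas_empty]⟩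
  have hTfeas : feasible p d T := (Finset.mem_filter.mp hTmem).2
  have hTmax' : ∀ U : Finset (Fin n), feasible p d U → U.card ≤ T.card := by
    intro U hU; exact hTmax U (by simp [hU])
  -- adjust it so that `m` is excluded
  obtain ⟨T', hT'feas, hT'card, hmT'⟩ :
      ∃ T' : Finset (Fin n), feasible p d T' ∧ T'.card = T.card ∧ m ∉ T' := by
    by_cases hm : m ∈ T
    · -- find a job `j ≤ k` outside `T`
      obtain ⟨j, hjk, hjT⟩ : ∃ j : Fin n, j ≤ k ∧ j ∉ T := by
        by_contra h
        push_neg at h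
        have hsub : Finset.univ.filter (· ≤ k) ⊆ T.filter (· ≤ k) := by
          intro x hx
          have hx' : x ≤ k := by simpa using hx
          exact Finset.mem_filter.mpr ⟨h x hx', hx'⟩
        have h1 := Finset.sum_le_sum_of_subset (f := p) hsub
        have h2 := hTfeas k
        omega
      have hjm : j ≠ m := fun h => hjT (h ▸ hm)
      refine ⟨insert j (T.erase m), ?_, ?_, ?_⟩
      · intro i
        by_cases him : m ≤ i
        · have hmf : m ∈ T.filter (· ≤ i) := Finset.mem_filter.mpr ⟨hm, him⟩
          have herase : (T.erase m).filter (· ≤ i) = (T.filter (· ≤ i)).erase m := by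
            ext x
            simp only [Finset.mem_filter, Finset.mem_erase]
            tauto
          have hkey : p m + ∑ x ∈ (T.filter (· ≤ i)).erase m, p x
              = ∑ x ∈ T.filter (· ≤ i), p x := Finset.add_sum_erase _ p hmf
          have hdi := hTfeas i
          by_cases hji : j ≤ i
          · have hjnot : j ∉ (T.erase m).filter (· ≤ i) := by
              intro h
              exact hjT (Finset.mem_of_mem_erase (Finset.mem_filter.mp h).1)
            rw [Finset.filter_insert, if_pos hji, Finset.sum_insert hjnot, herase]
            have hpj : p j ≤ p m := hmax j hjk
            omega
          · rw [Finset.filter_insert, if_neg hji, herase]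
            omega
        · by_cases hji : j ≤ i
          · have hik : i < k := lt_of_lt_of_le (lt_of_not_ge him) hmk
            calc ∑ x ∈ (insert j (T.erase m)).filter (· ≤ i), p x
                ≤ ∑ x ∈ Finset.univ.filter (· ≤ i), p x := by
                  apply Finset.sum_le_sum_of_subset
                  intro x hx
                  have := (Finset.mem_filter.mp hx).2
                  exact Finset.mem_filter.mpr ⟨Finset.mem_univ x, this⟩
              _ ≤ d i := hfirst i hik
          · rw [Finset.filter_insert, if_neg hji]
            have herase2 : (T.erase m).filter (· ≤ i) = T.filter (· ≤ i) := by
              ext x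
              simp only [Finset.mem_filter, Finset.mem_erase]
              constructor
              · rintro ⟨⟨_, hxT⟩, hxi⟩; exact ⟨hxT, hxi⟩
              · rintro ⟨hxT, hxi⟩
                refine ⟨⟨?_, hxT⟩, hxi⟩
                rintro rfl; exact him hxi
            rw [herase2]
            exact hTfeas i
      · rw [Finset.card_insert_of_notMem
            (fun h => hjT (Finset.mem_of_mem_erase h)),
          Finset.card_erase_of_mem hm]
        have : 1 ≤ T.card := Finset.card_pos.mpr ⟨m, hm⟩
        omega
      · intro h
        rcases Finset.mem_insert.mp h with h | h
        · exact hjm h.symm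
        · exact (Finset.mem_erase.mp h).1 rfl
    · exact ⟨T, hTfeas, rfl, hm⟩
  obtain ⟨σ, hσ⟩ := exists_schedule p T'
  have hsub : T' ⊆ ontime p d σ := by
    intro x hx
    simp only [ontime, Finset.mem_filter, Finset.mem_univ, true_and]
    rw [hσ x hx]
    exact hT'feas x
  have hOfeas := ontime_feasible p d hd σ
  have hOcard : (ontime p d σ).card ≤ T'.card := by
    rw [hT'card]; exact hTmax' _ hOfeas
  have hOeq : ontime p d σ = T' := (Finset.eq_of_subset_of_card_le hsub hOcard).symm
  refine ⟨σ, ?_, ?_⟩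
  · intro τ
    have h1 := numLate_add_ontime p d σ
    have h2 := numLate_add_ontime p d τ
    have h3 : (ontime p d τ).card ≤ (ontime p d σ).card := by
      rw [hOeq, hT'card]
      exact hTmax' _ (ontime_feasible p d hd τ)
    omega
  · have hmo : m ∉ ontime p d σ := by rw [hOeq]; exact hmT'
    simp only [ontime, Finset.mem_filter, Finset.mem_univ, true_and] at hmo
    omega
end

section
/- Suppose the jobs are indexed in EDD order, i.e., d is monotone nondecreasing, and suppose k is the first late job of the EDD sequence: ∑_{i ≤ j} p_i ≤ d j for all j < k, and ∑_{i ≤ k} p_i > d k. Let m ≤ k be a job with p_m = max_{i ≤ k} p_i, and let I⁻ be the sub-instance on the jobs other than m (same processing times and due dates). Then opt(I⁻) = opt(I) − 1, where opt denotes the minimum number of late jobs over all schedules of the respective job set. -/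
/-- Completion time of job `j` when the jobs of the set `J` are scheduled
according to the ordering given by `σ`. -/
def completionOn {n : ℕ} (p : Fin n → ℕ) (J : Finset (Fin n))
    (σ : Equiv.Perm (Fin n)) (j : Fin n) : ℕ :=
  ∑ i ∈ J.filter (fun i => σ.symm i ≤ σ.symm j), p i

/-- Number of late jobs of the sub-instance on the job set `J` under the
ordering given by `σ`. -/
def numLateOn {n : ℕ} (p d : Fin n → ℕ) (J : Finset (Fin n))
    (σ : Equiv.Perm (Fin n)) : ℕ :=
  (J.filter (fun j => d j < completionOn p J σ j)).card

/-- `opt(J)`: minimum number of late jobs over all schedules of the job set `J`. -/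
noncomputable def optOn {n : ℕ} (p d : Fin n → ℕ) (J : Finset (Fin n)) : ℕ :=
  sInf {c | ∃ σ : Equiv.Perm (Fin n), c = numLateOn p d J σ}


/-!
For monotone `d`, `opt(J) = |J| - s(J)`, where `s(J)` is the largest size of a subset of `J`
whose EDD sequence has no late job: the on-time jobs of any schedule form such a set, and such
a set can be scheduled first, in EDD order. Since `I⁻` is a sub-instance, `s(I⁻) ≤ s(I)`. For
the converse, a maximum feasible set `E` of `I` misses some job `ℓ ≤ k`, because the EDD
prefix up to `k` is late. If `m ∈ E`, trading `m` for `ℓ` keeps `E` feasible: prefixes ending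
before `k` are on time in the full EDD sequence, and those ending at `j ≥ k` contain both jobs
and only get shorter, as `p ℓ ≤ p m`. Hence `s(I⁻) = s(I)`.
-/

open Finset

theorem Tuple.sort_symm_apply_le_iff {n : ℕ} {α : Type*} [LinearOrder α] {f : Fin n → α}
    (hf : Function.Injective f) (i j : Fin n) :
    (Tuple.sort f).symm i ≤ (Tuple.sort f).symm j ↔ f i ≤ f j := by
  have hmono : StrictMono (f ∘ Tuple.sort f) :=
    (Tuple.monotone_sort f).strictMono_of_injective (hf.comp (Tuple.sort f).injective)
  simpa using hmono.le_iff_le (a := (Tuple.sort f).symm i) (b := (Tuple.sort f).symm j) |>.symm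

theorem completionOn_sort {n : ℕ} {α : Type*} [LinearOrder α] (p : Fin n → ℕ)
    (J : Finset (Fin n)) {f : Fin n → α} (hf : Function.Injective f) (j : Fin n) :
    completionOn p J (Tuple.sort f) j = ∑ i ∈ J with f i ≤ f j, p i := by
  simp only [completionOn, Tuple.sort_symm_apply_le_iff hf]

section EDD

variable {n : ℕ} (p d : Fin n → ℕ)

theorem exists_numLateOn_eq_optOn (J : Finset (Fin n)) :
    ∃ σ, numLateOn p d J σ = optOn p d J :=
  (Nat.sInf_mem ⟨_, 1, rfl⟩ : optOn p d J ∈ _).imp fun _ h => h.symm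

theorem optOn_le_numLateOn (J : Finset (Fin n)) (σ : Equiv.Perm (Fin n)) :
    optOn p d J ≤ numLateOn p d J σ :=
  Nat.sInf_le ⟨σ, rfl⟩

def prefixSum (E : Finset (Fin n)) (j : Fin n) : ℕ :=
  ∑ i ∈ E with i ≤ j, p i

/-- The bound is required at every `j`, not only at `j ∈ E`: for monotone `d` this is
equivalent, and it makes the exchange argument uniform in `j`. -/
def EDDFeasible (E : Finset (Fin n)) : Prop :=
  ∀ j, prefixSum p E j ≤ d j

/-- The schedule running the jobs of `E` first, in index order, and then all the others. -/
def eddFirst (E : Finset (Fin n)) : Equiv.Perm (Fin n) :=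
  Tuple.sort fun i => toLex (decide (i ∉ E), i)

variable {p d}

theorem completionOn_eddFirst {E J : Finset (Fin n)} (hEJ : E ⊆ J) {j : Fin n} (hj : j ∈ E) :
    completionOn p J (eddFirst E) j = prefixSum p E j := by
  have hinj : Function.Injective fun i : Fin n => toLex (decide (i ∉ E), i) :=
    fun a b h => congrArg Prod.snd (toLex.injective h)
  rw [eddFirst, completionOn_sort p J hinj, prefixSum]
  refine sum_congr ?_ fun _ _ => rfl
  ext i
  by_cases hi : i ∈ E
  · simp [Prod.Lex.toLex_le_toLex, hi, hj, hEJ hi]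
  · simp [Prod.Lex.toLex_le_toLex, hi, hj]

theorem optOn_add_card_le {E J : Finset (Fin n)} (hE : EDDFeasible p d E) (hEJ : E ⊆ J) :
    optOn p d J + #E ≤ #J := by
  have hlate : {j ∈ J | d j < completionOn p J (eddFirst E) j} ⊆ J \ E := fun j hj => by
    rw [mem_filter] at hj
    refine mem_sdiff.2 ⟨hj.1, fun hjE => ?_⟩
    have := hE j
    rw [← completionOn_eddFirst hEJ hjE] at this
    omega
  calc optOn p d J + #E ≤ #(J \ E) + #E :=
        Nat.add_le_add_right ((optOn_le_numLateOn p d J _).trans (card_le_card hlate)) _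
    _ = #J := card_sdiff_add_card_eq_card hEJ

theorem eddFeasible_filter_completionOn_le (hd : Monotone d) (J : Finset (Fin n))
    (σ : Equiv.Perm (Fin n)) : EDDFeasible p d {j ∈ J | completionOn p J σ j ≤ d j} := by
  intro j
  set T := {j ∈ J | completionOn p J σ j ≤ d j}
  obtain hempty | hne := ({i ∈ T | i ≤ j}).eq_empty_or_nonempty
  · simp [prefixSum, hempty]
  obtain ⟨j', hj', hlast⟩ := exists_max_image _ (fun i => σ.symm i) hne
  simp only [T, mem_filter] at hj'
  have hsub : {i ∈ T | i ≤ j} ⊆ {i ∈ J | σ.symm i ≤ σ.symm j'} := fun i hi =>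
    mem_filter.2 ⟨(mem_filter.1 (mem_filter.1 hi).1).1, hlast i hi⟩
  calc prefixSum p T j ≤ completionOn p J σ j' := sum_le_sum_of_subset hsub
    _ ≤ d j' := hj'.1.2
    _ ≤ d j := hd hj'.2

variable (p) in
theorem exists_eddFeasible_optOn_add_card_eq (hd : Monotone d) (J : Finset (Fin n)) :
    ∃ E ⊆ J, EDDFeasible p d E ∧ optOn p d J + #E = #J := by
  obtain ⟨σ, hσ⟩ := exists_numLateOn_eq_optOn p d J
  refine ⟨_, filter_subset _ J, eddFeasible_filter_completionOn_le hd J σ, ?_⟩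
  rw [← hσ, numLateOn, add_comm]
  simpa only [not_le] using
    card_filter_add_card_filter_not (s := J) fun j => completionOn p J σ j ≤ d j

theorem prefixSum_mono {E F : Finset (Fin n)} (h : E ⊆ F) (j : Fin n) :
    prefixSum p E j ≤ prefixSum p F j :=
  sum_le_sum_of_subset (filter_subset_filter _ h)

theorem prefixSum_insert_erase_le {E : Finset (Fin n)} {m ℓ j : Fin n} (hm : m ∈ E)
    (hℓ : ℓ ∉ E) (hmj : m ≤ j) (hℓj : ℓ ≤ j) (hp : p ℓ ≤ p m) :
    prefixSum p (insert ℓ (E.erase m)) j ≤ prefixSum p E j := by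
  have hℓ' : ℓ ∉ {i ∈ E.erase m | i ≤ j} := fun h => hℓ (mem_of_mem_erase (mem_filter.1 h).1)
  have hm' : m ∈ {i ∈ E | i ≤ j} := mem_filter.2 ⟨hm, hmj⟩
  rw [prefixSum, prefixSum, filter_insert, if_pos hℓj, sum_insert hℓ', filter_erase,
    ← add_sum_erase _ _ hm']
  omega

theorem EDDFeasible.exists_le_notMem {E : Finset (Fin n)} (hE : EDDFeasible p d E) {k : Fin n}
    (hk : d k < prefixSum p univ k) : ∃ ℓ ≤ k, ℓ ∉ E := by
  by_contra! hall
  have : prefixSum p univ k ≤ prefixSum p E k :=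
    sum_le_sum_of_subset fun i hi => by
      have hik := (mem_filter.1 hi).2
      exact mem_filter.2 ⟨hall i hik, hik⟩
  exact lt_irrefl _ (hk.trans_le (this.trans (hE k)))

theorem EDDFeasible.insert_erase {E : Finset (Fin n)} (hE : EDDFeasible p d E) {k m ℓ : Fin n}
    (hfirst : ∀ j < k, prefixSum p univ j ≤ d j) (hm : m ∈ E) (hℓ : ℓ ∉ E) (hmk : m ≤ k)
    (hℓk : ℓ ≤ k) (hp : p ℓ ≤ p m) : EDDFeasible p d (insert ℓ (E.erase m)) := by
  intro j
  rcases lt_or_ge j k with hjk | hkj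
  · exact (prefixSum_mono (subset_univ _) j).trans (hfirst j hjk)
  · exact (prefixSum_insert_erase_le hm hℓ (hmk.trans hkj) (hℓk.trans hkj) hp).trans (hE j)

theorem EDDFeasible.exists_subset_erase_card_eq {E : Finset (Fin n)} (hE : EDDFeasible p d E)
    {k m : Fin n} (hfirst : ∀ j < k, prefixSum p univ j ≤ d j) (hk : d k < prefixSum p univ k)
    (hmk : m ≤ k) (hmax : ∀ i ≤ k, p i ≤ p m) :
    ∃ E' ⊆ univ.erase m, EDDFeasible p d E' ∧ #E' = #E := by
  obtain ⟨ℓ, hℓk, hℓ⟩ := hE.exists_le_notMem hk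
  by_cases hm : m ∈ E
  · have hℓm : ℓ ≠ m := fun h => hℓ (h ▸ hm)
    refine ⟨insert ℓ (E.erase m), ?_, hE.insert_erase hfirst hm hℓ hmk hℓk (hmax ℓ hℓk), ?_⟩
    · exact insert_subset (mem_erase.2 ⟨hℓm, mem_univ ℓ⟩) (erase_subset_erase m (subset_univ E))
    · rw [card_insert_of_notMem fun h => hℓ (mem_of_mem_erase h), card_erase_add_one hm]
  · exact ⟨E, fun x hx => mem_erase.2 ⟨ne_of_mem_of_not_mem hx hm, mem_univ x⟩, hE, rfl⟩

end EDD

/-- If the jobs are in EDD order, `k` is the first late job of the EDD sequence,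
and `m ≤ k` has maximum processing time among the jobs `i ≤ k`, then deleting `m`
decreases the minimum number of late jobs by exactly one:
`opt(I⁻) = opt(I) - 1`. -/
theorem opt_erase_max_eq {n : ℕ} (p d : Fin n → ℕ) (hd : Monotone d)
    (k : Fin n)
    (hfirst : ∀ j : Fin n, j < k → ∑ i ∈ Finset.univ.filter (· ≤ j), p i ≤ d j)
    (hk : d k < ∑ i ∈ Finset.univ.filter (· ≤ k), p i)
    (m : Fin n) (hmk : m ≤ k) (hmax : ∀ i : Fin n, i ≤ k → p i ≤ p m) :
    optOn p d (Finset.univ.erase m) + 1 = optOn p d Finset.univ := by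
  obtain ⟨E₀, -, hE₀, hopt₀⟩ := exists_eddFeasible_optOn_add_card_eq p hd (univ.erase m)
  obtain ⟨E₁, -, hE₁, hopt₁⟩ := exists_eddFeasible_optOn_add_card_eq p hd univ
  obtain ⟨E₂, hE₂m, hE₂, hcard₂⟩ := hE₁.exists_subset_erase_card_eq hfirst hk hmk hmax
  have hle₀ := optOn_add_card_le hE₀ (subset_univ E₀)
  have hle₂ := optOn_add_card_le hE₂ hE₂m
  have hcard := card_erase_add_one (mem_univ m)
  omega
end

section
/- (Correctness of the Moore-Hodgson Algorithm) Suppose the jobs are indexed in EDD order, i.e., d is monotone nondecreasing. Define the Moore-Hodgson rejected set R recursively as follows: starting from the set S of all jobs, if scheduling the jobs of S in increasing index order leaves some job late, let k ∈ S be the first late job (the smallest j ∈ S with ∑_{i ∈ S, i ≤ j} p_i > d j), reject from S a job m ∈ S with m ≤ k whose processing time p_m is maximum among {i ∈ S : i ≤ k}, and recurse on S \ {m}; stop when no job of S is late. Then the schedule that places the final surviving jobs first in increasing index order, followed by the rejected jobs R in arbitrary order, minimizes the number of late jobs; equivalently, |R| equals the minimum number of late jobs over all schedules, and every surviving job is on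 time in this schedule. -/
/-- `MooreHodgson p d S S'` holds iff the Moore-Hodgson Algorithm, started on the
job set `S`, can terminate with surviving job set `S'`: if scheduling the jobs
of `S` in increasing index order leaves no job late, the algorithm stops with
`S' = S`; otherwise it determines the first late job `k ∈ S`, rejects a job
`m ∈ S` with `m ≤ k` of maximum processing time among `{i ∈ S : i ≤ k}`, and
recurses on `S \ {m}`. -/
inductive MooreHodgson {n : ℕ} (p d : Fin n → ℕ) :
    Finset (Fin n) → Finset (Fin n) → Prop
  | done (S : Finset (Fin n))
      (hontime : ∀ j ∈ S, ∑ i ∈ S.filter (· ≤ j), p i ≤ d j) :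
      MooreHodgson p d S S
  | step (S S' : Finset (Fin n)) (k m : Fin n)
      (hkS : k ∈ S)
      (hklate : d k < ∑ i ∈ S.filter (· ≤ k), p i)
      (hkfirst : ∀ j ∈ S, j < k → ∑ i ∈ S.filter (· ≤ j), p i ≤ d j)
      (hmS : m ∈ S) (hmk : m ≤ k)
      (hmax : ∀ i ∈ S, i ≤ k → p i ≤ p m)
      (hrec : MooreHodgson p d (S.erase m) S') :
      MooreHodgson p d S S'

/-- The final surviving set is on time. -/
lemma mh_ontime {n : ℕ} {p d : Fin n → ℕ} {S₀ S : Finset (Fin n)}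
    (h : MooreHodgson p d S₀ S) :
    ∀ j ∈ S, ∑ i ∈ S.filter (· ≤ j), p i ≤ d j := by
  induction h with
  | done S h => exact h
  | step S S' k m _ _ _ _ _ _ _ ih => exact ih

set_option maxHeartbeats 1000000 in
/-- Key combinatorial lemma: every feasible subset of the starting set has
cardinality at most that of the surviving set. -/
lemma mh_key {n : ℕ} {p d : Fin n → ℕ} (hd : Monotone d) {S₀ S : Finset (Fin n)}
    (h : MooreHodgson p d S₀ S) :
    ∀ T ⊆ S₀, (∀ j ∈ T, ∑ i ∈ T.filter (· ≤ j), p i ≤ d j) → T.card ≤ S.card := by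
  induction h with
  | done S h => exact fun T hT _ => Finset.card_le_card hT
  | step S S' k m hkS hklate hkfirst hmS hmk hmax hrec ih =>
    intro T hTS hTfeas
    by_cases hmT : m ∈ T
    · -- exchange argument
      obtain ⟨x, hxf, hxT⟩ : ∃ x ∈ S.filter (· ≤ k), x ∉ T := by
        by_contra hc
        push_neg at hc
        have hsub : S.filter (· ≤ k) ⊆ T.filter (· ≤ k) := by
          intro i hi
          rw [Finset.mem_filter] at hi ⊢
          exact ⟨hc i (Finset.mem_filter.mpr hi), hi.2⟩
        have hkT : k ∈ T := hc k (Finset.mem_filter.mpr ⟨hkS, le_rfl⟩)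
        have h1 := hTfeas k hkT
        have h2 : ∑ i ∈ S.filter (· ≤ k), p i ≤ ∑ i ∈ T.filter (· ≤ k), p i :=
          Finset.sum_le_sum_of_subset hsub
        omega
      rw [Finset.mem_filter] at hxf
      obtain ⟨hxS, hxk⟩ := hxf
      obtain ⟨T', hT'def⟩ : ∃ T' : Finset (Fin n), T' = insert x (T.erase m) :=
        ⟨_, rfl⟩
      have hxem : x ∉ T.erase m := fun h => hxT (Finset.mem_of_mem_erase h)
      have hcard : T'.card = T.card := by
        rw [hT'def, Finset.card_insert_of_notMem hxem, Finset.card_erase_of_mem hmT]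
        have := Finset.card_pos.mpr ⟨m, hmT⟩
        omega
      have hT'sub : T' ⊆ S.erase m := by
        intro i hi
        rw [hT'def] at hi
        rcases Finset.mem_insert.mp hi with rfl | hi
        · exact Finset.mem_erase.mpr ⟨fun h => hxT (h ▸ hmT), hxS⟩
        · exact Finset.mem_erase.mpr ⟨(Finset.mem_erase.mp hi).1,
            hTS (Finset.mem_of_mem_erase hi)⟩
      have hT'feas : ∀ j ∈ T', ∑ i ∈ T'.filter (· ≤ j), p i ≤ d j := by
        intro j hjT'
        have hjS : j ∈ S := Finset.mem_of_mem_erase (hT'sub hjT')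
        rcases lt_or_ge j k with hjk | hkj
        · -- easy: j before k, use hkfirst
          calc ∑ i ∈ T'.filter (· ≤ j), p i
              ≤ ∑ i ∈ S.filter (· ≤ j), p i := by
                apply Finset.sum_le_sum_of_subset
                intro i hi
                rw [Finset.mem_filter] at hi ⊢
                exact ⟨Finset.mem_of_mem_erase (hT'sub hi.1), hi.2⟩
            _ ≤ d j := hkfirst j hjS hjk
        · by_cases hjx : j = x
          · -- hard case: j = x = k
            have hxk' : x = k := le_antisymm hxk (hjx ▸ hkj)
            have hkT : k ∉ T := hxk' ▸ hxT
            rw [hjx, hxk']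
            have hmx : m ≠ k := fun h => hkT (h ▸ hmT)
            have hmltk : m < k := lt_of_le_of_ne hmk hmx
            -- j* : largest element of S below k
            have hBne : (S.filter (· < k)).Nonempty :=
              ⟨m, Finset.mem_filter.mpr ⟨hmS, hmltk⟩⟩
            obtain ⟨js, hjsdef⟩ : ∃ js, js = (S.filter (· < k)).max' hBne := ⟨_, rfl⟩
            have hjsf := (S.filter (· < k)).max'_mem hBne
            rw [← hjsdef, Finset.mem_filter] at hjsf
            obtain ⟨hjsS, hjsk⟩ := hjsf
            have hsplit : S.filter (· ≤ k) = insert k (S.filter (· ≤ js)) := by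
              ext i
              simp only [Finset.mem_filter, Finset.mem_insert]
              constructor
              · rintro ⟨hiS, hik⟩
                rcases eq_or_lt_of_le hik with rfl | hik'
                · exact Or.inl rfl
                · refine Or.inr ⟨hiS, ?_⟩
                  have him : i ∈ S.filter (· < k) := Finset.mem_filter.mpr ⟨hiS, hik'⟩
                  rw [hjsdef]
                  exact Finset.le_max' _ i him
              · rintro (rfl | ⟨hiS, hij⟩)
                · exact ⟨hkS, le_rfl⟩
                · exact ⟨hiS, hij.trans hjsk.le⟩
            have hknotin : k ∉ S.filter (· ≤ js) := by
              rw [Finset.mem_filter]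
              exact fun h => absurd h.2 (not_le.mpr hjsk)
            have hA : ∑ i ∈ S.filter (· ≤ k), p i
                = p k + ∑ i ∈ S.filter (· ≤ js), p i := by
              rw [hsplit, Finset.sum_insert hknotin]
            have hmA : m ∈ S.filter (· ≤ k) := Finset.mem_filter.mpr ⟨hmS, hmk⟩
            have hB : ∑ i ∈ (S.filter (· ≤ k)).erase m, p i + p m
                = ∑ i ∈ S.filter (· ≤ k), p i := Finset.sum_erase_add _ _ hmA
            have hpx : p k ≤ p m := hmax k hkS le_rfl
            have hdjs : d js ≤ d k := hd hjsk.le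
            have hLjs : ∑ i ∈ S.filter (· ≤ js), p i ≤ d js := hkfirst js hjsS hjsk
            have hsub2 : T'.filter (· ≤ k) ⊆ (S.filter (· ≤ k)).erase m := by
              intro i hi
              rw [Finset.mem_filter] at hi
              have := Finset.mem_erase.mp (hT'sub hi.1)
              exact Finset.mem_erase.mpr ⟨this.1, Finset.mem_filter.mpr ⟨this.2, hi.2⟩⟩
            have hle : ∑ i ∈ T'.filter (· ≤ k), p i
                ≤ ∑ i ∈ (S.filter (· ≤ k)).erase m, p i :=
              Finset.sum_le_sum_of_subset hsub2
            omega
          · -- j ∈ T, m ≤ k ≤ j, x ≤ k ≤ j : swap sums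
            rw [hT'def] at hjT'
            have hjT : j ∈ T := Finset.mem_of_mem_erase
              ((Finset.mem_insert.mp hjT').resolve_left hjx)
            have hjm : j ≠ m := (Finset.mem_erase.mp
              ((Finset.mem_insert.mp hjT').resolve_left hjx)).1
            have hxj : x ≤ j := hxk.trans hkj
            have hmj : m ≤ j := hmk.trans hkj
            have hsplit : T'.filter (· ≤ j) = insert x ((T.filter (· ≤ j)).erase m) := by
              ext i
              simp only [hT'def, Finset.mem_filter, Finset.mem_insert, Finset.mem_erase]
              constructor
              · rintro ⟨rfl | ⟨him, hiT⟩, hij⟩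
                · exact Or.inl rfl
                · exact Or.inr ⟨him, hiT, hij⟩
              · rintro (rfl | ⟨him, hiT, hij⟩)
                · exact ⟨Or.inl rfl, hxj⟩
                · exact ⟨Or.inr ⟨him, hiT⟩, hij⟩
            have hxnot : x ∉ (T.filter (· ≤ j)).erase m :=
              fun h => hxT (Finset.mem_filter.mp (Finset.mem_of_mem_erase h)).1
            have hmin : m ∈ T.filter (· ≤ j) := Finset.mem_filter.mpr ⟨hmT, hmj⟩
            have hA : ∑ i ∈ T'.filter (· ≤ j), p i
                = p x + ∑ i ∈ (T.filter (· ≤ j)).erase m, p i := by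
              rw [hsplit, Finset.sum_insert hxnot]
            have hB : ∑ i ∈ (T.filter (· ≤ j)).erase m, p i + p m
                = ∑ i ∈ T.filter (· ≤ j), p i := Finset.sum_erase_add _ _ hmin
            have hpx : p x ≤ p m := hmax x hxS hxk
            have hfe := hTfeas j hjT
            omega
      have := ih T' hT'sub hT'feas
      omega
    · exact ih T (Finset.subset_erase.mpr ⟨hTS, hmT⟩) hTfeas

/-- The set of on-time jobs of any schedule is feasible in increasing index order. -/
lemma ontime_feasible_s10 {n : ℕ} (p d : Fin n → ℕ) (hd : Monotone d)
    (σ : Equiv.Perm (Fin n)) :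
    ∀ j ∈ Finset.univ.filter (fun j => ¬ d j < completion p σ j),
      ∑ i ∈ (Finset.univ.filter (fun j => ¬ d j < completion p σ j)).filter (· ≤ j), p i
        ≤ d j := by
  set T := Finset.univ.filter (fun j => ¬ d j < completion p σ j) with hTdef
  intro j hjT
  have hne : (T.filter (· ≤ j)).Nonempty := ⟨j, Finset.mem_filter.mpr ⟨hjT, le_rfl⟩⟩
  obtain ⟨j', hj'f, hj'max⟩ := Finset.exists_max_image (T.filter (· ≤ j))
    (fun i => σ.symm i) hne
  rw [Finset.mem_filter] at hj'f
  obtain ⟨hj'T, hj'j⟩ := hj'f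
  have hsub : T.filter (· ≤ j) ⊆ Finset.univ.filter (fun i => σ.symm i ≤ σ.symm j') := by
    intro i hi
    exact Finset.mem_filter.mpr ⟨Finset.mem_univ i, hj'max i hi⟩
  calc ∑ i ∈ T.filter (· ≤ j), p i
      ≤ completion p σ j' := Finset.sum_le_sum_of_subset hsub
    _ ≤ d j' := not_lt.mp (Finset.mem_filter.mp hj'T).2
    _ ≤ d j := hd hj'j

/-- The rank of a job in the schedule "S first in increasing order, rest after". -/
def mhRank {n : ℕ} (S : Finset (Fin n)) (j : Fin n) : ℕ :=
  if j ∈ S then (S.filter (· < j)).card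
  else S.card + ((Finset.univ \ S).filter (· < j)).card

lemma mhRank_lt {n : ℕ} (S : Finset (Fin n)) (j : Fin n) : mhRank S j < n := by
  unfold mhRank
  split_ifs with h
  · have h1 : (S.filter (· < j)).card < S.card :=
      Finset.card_lt_card ⟨Finset.filter_subset _ _,
        fun hc => absurd (Finset.mem_filter.mp (hc h)).2 (lt_irrefl j)⟩
    have h2 : S.card ≤ n := by
      simpa using Finset.card_le_univ S
    omega
  · have hj : j ∈ Finset.univ \ S := Finset.mem_sdiff.mpr ⟨Finset.mem_univ j, h⟩
    have h1 : ((Finset.univ \ S).filter (· < j)).card < (Finset.univ \ S).card :=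
      Finset.card_lt_card ⟨Finset.filter_subset _ _,
        fun hc => absurd (Finset.mem_filter.mp (hc hj)).2 (lt_irrefl j)⟩
    have h2 : (Finset.univ \ S).card + S.card = n := by
      rw [Finset.card_sdiff_add_card_eq_card (Finset.subset_univ S)]
      simp
    omega

lemma mhRank_strict_mem {n : ℕ} (S : Finset (Fin n)) {a b : Fin n}
    (ha : a ∈ S) (hb : b ∈ S) (hab : a < b) : mhRank S a < mhRank S b := by
  unfold mhRank
  rw [if_pos ha, if_pos hb]
  apply Finset.card_lt_card
  constructor
  · intro i hi
    rw [Finset.mem_filter] at hi ⊢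
    exact ⟨hi.1, hi.2.trans hab⟩
  · intro hc
    have := Finset.mem_filter.mp (hc (Finset.mem_filter.mpr ⟨ha, hab⟩))
    exact absurd this.2 (lt_irrefl a)

lemma mhRank_strict_nonmem {n : ℕ} (S : Finset (Fin n)) {a b : Fin n}
    (ha : a ∉ S) (hb : b ∉ S) (hab : a < b) : mhRank S a < mhRank S b := by
  unfold mhRank
  rw [if_neg ha, if_neg hb]
  have ha' : a ∈ Finset.univ \ S := Finset.mem_sdiff.mpr ⟨Finset.mem_univ a, ha⟩
  have : ((Finset.univ \ S).filter (· < a)).card < ((Finset.univ \ S).filter (· < b)).card := by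
    apply Finset.card_lt_card
    constructor
    · intro i hi
      rw [Finset.mem_filter] at hi ⊢
      exact ⟨hi.1, hi.2.trans hab⟩
    · intro hc
      have := Finset.mem_filter.mp (hc (Finset.mem_filter.mpr ⟨ha', hab⟩))
      exact absurd this.2 (lt_irrefl a)
  omega

lemma mhRank_mem_lt {n : ℕ} (S : Finset (Fin n)) {a : Fin n} (ha : a ∈ S) :
    mhRank S a < S.card := by
  unfold mhRank
  rw [if_pos ha]
  exact Finset.card_lt_card ⟨Finset.filter_subset _ _,
    fun hc => absurd (Finset.mem_filter.mp (hc ha)).2 (lt_irrefl a)⟩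

lemma mhRank_nonmem_ge {n : ℕ} (S : Finset (Fin n)) {a : Fin n} (ha : a ∉ S) :
    S.card ≤ mhRank S a := by
  unfold mhRank
  rw [if_neg ha]
  omega

lemma mhRank_injective {n : ℕ} (S : Finset (Fin n)) :
    Function.Injective (fun j => (⟨mhRank S j, mhRank_lt S j⟩ : Fin n)) := by
  intro a b hab
  have hab' : mhRank S a = mhRank S b := congrArg Fin.val hab
  by_contra hne
  rcases lt_or_gt_of_ne hne with h | h
  all_goals {
    by_cases haS : a ∈ S <;> by_cases hbS : b ∈ S
    · first
      | exact absurd hab' (ne_of_lt (mhRank_strict_mem S haS hbS h))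
      | exact absurd hab'.symm (ne_of_lt (mhRank_strict_mem S hbS haS h))
    · have := lt_of_lt_of_le (mhRank_mem_lt S haS) (mhRank_nonmem_ge S hbS)
      omega
    · have := lt_of_lt_of_le (mhRank_mem_lt S hbS) (mhRank_nonmem_ge S haS)
      omega
    · first
      | exact absurd hab' (ne_of_lt (mhRank_strict_nonmem S haS hbS h))
      | exact absurd hab'.symm (ne_of_lt (mhRank_strict_nonmem S hbS haS h))
  }

/-- Schedule that puts `S` first in increasing index order. -/
noncomputable def mhPerm {n : ℕ} (S : Finset (Fin n)) : Equiv.Perm (Fin n) :=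
  (Equiv.ofBijective (fun j => (⟨mhRank S j, mhRank_lt S j⟩ : Fin n))
    ((Finite.injective_iff_bijective).mp (mhRank_injective S))).symm

lemma mhPerm_symm_apply {n : ℕ} (S : Finset (Fin n)) (j : Fin n) :
    ((mhPerm S).symm j : Fin n) = ⟨mhRank S j, mhRank_lt S j⟩ := rfl

lemma mhPerm_completion {n : ℕ} (p : Fin n → ℕ) (S : Finset (Fin n)) {j : Fin n}
    (hj : j ∈ S) : completion p (mhPerm S) j = ∑ i ∈ S.filter (· ≤ j), p i := by
  unfold completion
  congr 1
  ext i
  simp only [Finset.mem_filter, Finset.mem_univ, true_and, mhPerm_symm_apply,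
    Fin.mk_le_mk]
  constructor
  · intro hle
    by_cases hiS : i ∈ S
    · refine ⟨hiS, ?_⟩
      by_contra hij
      have := mhRank_strict_mem S hj hiS (not_le.mp hij)
      omega
    · have := lt_of_lt_of_le (mhRank_mem_lt S hj) (mhRank_nonmem_ge S hiS)
      omega
  · rintro ⟨hiS, hij⟩
    rcases eq_or_lt_of_le hij with rfl | h
    · exact le_rfl
    · exact (mhRank_strict_mem S hiS hj h).le

/-- Correctness of the Moore-Hodgson Algorithm: if the jobs are in EDD order and
the algorithm, started on the set of all jobs, terminates with surviving set
`S` (so the rejected set is `R = univ \ S`), then every surviving job is on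
time when the surviving jobs are scheduled first in increasing index order, and
`|R|` equals the minimum number of late jobs over all schedules. -/
theorem mooreHodgson_correct {n : ℕ} (p d : Fin n → ℕ) (hd : Monotone d)
    (S : Finset (Fin n)) (hS : MooreHodgson p d Finset.univ S) :
    (∀ j ∈ S, ∑ i ∈ S.filter (· ≤ j), p i ≤ d j) ∧
    (Finset.univ \ S).card =
      sInf {c | ∃ σ : Equiv.Perm (Fin n), c = numLate p d σ} := by
  have h1 := mh_ontime hS
  refine ⟨h1, ?_⟩
  have hScard : (Finset.univ \ S).card + S.card = n := by
    rw [Finset.card_sdiff_add_card_eq_card (Finset.subset_univ S)]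
    simp
  apply le_antisymm
  · refine le_csInf ⟨numLate p d 1, 1, rfl⟩ ?_
    rintro c ⟨σ, rfl⟩
    set T := Finset.univ.filter (fun j => ¬ d j < completion p σ j) with hTdef
    have hfeas := ontime_feasible_s10 p d hd σ
    have hTcard : T.card ≤ S.card := mh_key hd hS T (Finset.subset_univ T) hfeas
    have hsum : numLate p d σ + T.card = n := by
      unfold numLate
      rw [hTdef]
      rw [Finset.card_filter_add_card_filter_not]
      simp
    omega
  · have hlate : numLate p d (mhPerm S) ≤ (Finset.univ \ S).card := by
      apply Finset.card_le_card
      intro j hj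
      rw [Finset.mem_filter] at hj
      rw [Finset.mem_sdiff]
      refine ⟨Finset.mem_univ j, fun hjS => ?_⟩
      rw [mhPerm_completion p S hjS] at hj
      exact absurd (h1 j hjS) (not_le.mpr hj.2)
    exact le_trans (Nat.sInf_le ⟨mhPerm S, rfl⟩) hlate
end

section
/- (Weighted Lemma, oppositely ordered case) Suppose each job j additionally has a weight w_j ∈ ℕ, and the processing times and weights are oppositely ordered: p_i ≤ p_j implies w_i ≥ w_j. Suppose the jobs are indexed in EDD order, i.e., d is monotone nondecreasing, and suppose k is the first late job of the EDD sequence: ∑_{i ≤ j} p_i ≤ d j for all j < k, and ∑_{i ≤ k} p_i > d k. Let m ≤ k be a job with p_m = max_{i ≤ k} p_i. Then there exists a schedule σ that minimizes the total weight of late jobs ∑_{j late under σ} w_j (over all schedules) and in which job m is late. -/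
/-- Total weight of the late jobs under schedule `σ`. -/
def weightLate {n : ℕ} (p d w : Fin n → ℕ) (σ : Equiv.Perm (Fin n)) : ℕ :=
  ∑ j ∈ Finset.univ.filter (fun j => d j < completion p σ j), w j

lemma exists_completion_ge {n : ℕ} (p : Fin n → ℕ) (τ : Equiv.Perm (Fin n))
    (S : Finset (Fin n)) (hS : S.Nonempty) :
    ∃ i ∈ S, ∑ i' ∈ S, p i' ≤ completion p τ i := by
  obtain ⟨i, hiS, hi⟩ := S.exists_max_image (fun i => τ.symm i) hS
  refine ⟨i, hiS, ?_⟩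
  unfold completion
  apply Finset.sum_le_sum_of_subset
  intro x hx
  simp only [Finset.mem_filter, Finset.mem_univ, true_and]
  exact hi x hx

/-- Weighted Lemma (oppositely ordered case): if processing times and weights are
oppositely ordered, the jobs are in EDD order, `k` is the first late job of the
EDD sequence, and `m ≤ k` has maximum processing time among the jobs `i ≤ k`,
then there is a schedule minimizing the total weight of late jobs in which job
`m` is late. -/
theorem exists_weighted_optimal_rejecting_max {n : ℕ} (p d w : Fin n → ℕ)
    (hpw : ∀ i j : Fin n, p i ≤ p j → w j ≤ w i)
    (hd : Monotone d)
    (k : Fin n)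
    (hfirst : ∀ j : Fin n, j < k → ∑ i ∈ Finset.univ.filter (· ≤ j), p i ≤ d j)
    (hk : d k < ∑ i ∈ Finset.univ.filter (· ≤ k), p i)
    (m : Fin n) (hmk : m ≤ k) (hmax : ∀ i : Fin n, i ≤ k → p i ≤ p m) :
    ∃ σ : Equiv.Perm (Fin n),
      (∀ τ : Equiv.Perm (Fin n), weightLate p d w σ ≤ weightLate p d w τ) ∧
      d m < completion p σ m := by
  classical
  obtain ⟨τ, -, hτ⟩ := Finset.exists_min_image Finset.univ (weightLate p d w)
    ⟨1, Finset.mem_univ 1⟩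
  have hτopt : ∀ τ', weightLate p d w τ ≤ weightLate p d w τ' :=
    fun τ' => hτ τ' (Finset.mem_univ _)
  by_cases hm : d m < completion p τ m
  · exact ⟨τ, hτopt, hm⟩
  push_neg at hm
  set O : Finset (Fin n) := Finset.univ.filter (fun i => completion p τ i ≤ d i) with hO
  have hmO : m ∈ O := by simp [hO, hm]
  obtain ⟨j, hjmem, hjsum⟩ := exists_completion_ge p τ (Finset.univ.filter (· ≤ k))
    ⟨k, by simp⟩
  have hjk : j ≤ k := by simpa using hjmem
  have hjO : j ∉ O := by
    simp only [hO, Finset.mem_filter, Finset.mem_univ, true_and]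
    intro h
    exact absurd ((hjsum.trans h).trans (hd hjk)) (not_le.mpr hk)
  have hjm : j ≠ m := fun h => hjO (h ▸ hmO)
  have hfeas : ∀ i : Fin n, (O.filter (· ≤ i)).Nonempty →
      ∑ i' ∈ O.filter (· ≤ i), p i' ≤ d i := by
    intro i hne
    obtain ⟨i', hi', hsum⟩ := exists_completion_ge p τ _ hne
    have h1 : i' ∈ O := (Finset.mem_filter.mp hi').1
    have h2 : i' ≤ i := (Finset.mem_filter.mp hi').2
    rw [hO] at h1
    exact hsum.trans (((Finset.mem_filter.mp h1).2).trans (hd h2))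
  set E' : Finset (Fin n) := insert j (O.erase m) with hE'
  have hmE' : m ∉ E' := by simp [hE', hjm.symm]
  set r : Fin n → ℕ := fun i => if i = m then 2*n+1 else if i ∈ E' then (i : ℕ) else n+1+(i:ℕ)
    with hr
  have hrinj : Function.Injective r := by
    intro a b hab
    have ha := a.isLt; have hb := b.isLt
    simp only [hr] at hab
    split_ifs at hab <;> first
      | (apply Fin.ext; omega)
      | simp_all
      | omega
  set σ : Equiv.Perm (Fin n) := Tuple.sort r with hσ
  have hmono : StrictMono (r ∘ σ) :=
    (Tuple.monotone_sort r).strictMono_of_injective (hrinj.comp σ.injective)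
  have hpos : ∀ a b : Fin n, σ.symm a ≤ σ.symm b ↔ r a ≤ r b := by
    intro a b
    rw [← hmono.le_iff_le]
    simp [Function.comp]
  have hcomp : ∀ b, completion p σ b = ∑ i ∈ Finset.univ.filter (fun i => r i ≤ r b), p i := by
    intro b
    unfold completion
    congr 1
    ext i
    simp [hpos]
  have hrm : r m = 2*n+1 := by simp [hr]
  have hlatem : d m < completion p σ m := by
    rw [hcomp]
    have h1 : Finset.univ.filter (fun i => r i ≤ r m) = Finset.univ := by
      apply Finset.filter_true_of_mem
      intro i _
      rw [hrm]
      have := i.isLt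
      simp only [hr]
      split_ifs <;> omega
    rw [h1]
    refine lt_of_lt_of_le (lt_of_le_of_lt (hd hmk) hk) ?_
    exact Finset.sum_le_sum_of_subset (Finset.filter_subset _ _)
  have hontime : ∀ i ∈ E', completion p σ i ≤ d i := by
    intro i hiE'
    have hne : i ≠ m := fun h => hmE' (h ▸ hiE')
    rw [hcomp]
    have hri : r i = (i : ℕ) := by simp [hr, hne, hiE']
    have hset : Finset.univ.filter (fun i' => r i' ≤ r i) = E'.filter (· ≤ i) := by
      ext i'
      have h1 := i.isLt; have h2 := i'.isLt
      simp only [Finset.mem_filter, Finset.mem_univ, true_and]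
      rw [hri]
      by_cases h' : i' = m
      · subst h'
        rw [hrm]
        simp only [hmE', false_and, iff_false, not_le]
        omega
      · by_cases hE : i' ∈ E'
        · have : r i' = (i' : ℕ) := by simp [hr, h', hE]
          rw [this]
          exact ⟨fun h => ⟨hE, Fin.le_def.mpr h⟩, fun h => Fin.le_def.mp h.2⟩
        · have : r i' = n+1+(i' : ℕ) := by simp [hr, h', hE]
          rw [this]
          simp only [hE, false_and, iff_false, not_le]
          omega
    rw [hset]
    by_cases hik : i < k
    · refine le_trans (Finset.sum_le_sum_of_subset ?_) (hfirst i hik)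
      intro x hx
      simp only [Finset.mem_filter] at hx ⊢
      exact ⟨Finset.mem_univ x, hx.2⟩
    · push_neg at hik
      have hji : j ≤ i := le_trans hjk hik
      have hmi : m ≤ i := le_trans hmk hik
      have hmOf : m ∈ O.filter (· ≤ i) := Finset.mem_filter.mpr ⟨hmO, hmi⟩
      have hchain : ∑ i' ∈ E'.filter (· ≤ i), p i' ≤ ∑ i' ∈ O.filter (· ≤ i), p i' := by
        have hstep : E'.filter (· ≤ i) = insert j ((O.filter (· ≤ i)).erase m) := by
          ext x
          simp only [hE', Finset.mem_filter, Finset.mem_insert, Finset.mem_erase]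
          constructor
          · rintro ⟨h | ⟨hxm, hxO⟩, hxi⟩
            · exact Or.inl h
            · exact Or.inr ⟨hxm, hxO, hxi⟩
          · rintro (rfl | ⟨hxm, hxO, hxi⟩)
            · exact ⟨Or.inl rfl, hji⟩
            · exact ⟨Or.inr ⟨hxm, hxO⟩, hxi⟩
        rw [hstep, Finset.sum_insert (by
          simp only [Finset.mem_erase, Finset.mem_filter]
          exact fun h => hjO h.2.1)]
        calc p j + ∑ i' ∈ (O.filter (· ≤ i)).erase m, p i'
            ≤ p m + ∑ i' ∈ (O.filter (· ≤ i)).erase m, p i' := by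
              exact Nat.add_le_add_right (hmax j hjk) _
          _ = ∑ i' ∈ O.filter (· ≤ i), p i' := Finset.add_sum_erase _ _ hmOf
      by_cases hiO : i ∈ O
      · exact hchain.trans (hfeas i ⟨i, Finset.mem_filter.mpr ⟨hiO, le_refl i⟩⟩)
      · have hij : i = j := by
          rcases Finset.mem_insert.mp hiE' with h | h
          · exact h
          · exact absurd (Finset.mem_of_mem_erase h) hiO
        have hik' : i = k := le_antisymm (hij ▸ hjk) hik
        have hmlt : m < k := lt_of_le_of_ne hmk (by
          rintro rfl
          exact hiO (by rw [hik']; exact hmO))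
        have hk0 : 0 < k.val := lt_of_le_of_lt (Nat.zero_le _) (Fin.lt_def.mp hmlt)
        set k' : Fin n := ⟨k.val - 1, by omega⟩ with hk'
        have hk'k : k' < k := by
          rw [Fin.lt_def]
          simp only [hk']
          omega
        have hsub : O.filter (· ≤ i) ⊆ Finset.univ.filter (· ≤ k') := by
          intro x hx
          simp only [Finset.mem_filter] at hx ⊢
          refine ⟨Finset.mem_univ x, ?_⟩
          have hxk : x ≠ k := by
            rintro rfl
            exact hiO (by rw [hik'] at hiE' hiO ⊢; exact hx.1)
          have : x < k := lt_of_le_of_ne (hik' ▸ hx.2) hxk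
          rw [Fin.le_def]
          simp only [hk']
          omega
        calc ∑ i' ∈ E'.filter (· ≤ i), p i'
            ≤ ∑ i' ∈ O.filter (· ≤ i), p i' := hchain
          _ ≤ ∑ i' ∈ Finset.univ.filter (· ≤ k'), p i' := Finset.sum_le_sum_of_subset hsub
          _ ≤ d k' := hfirst k' hk'k
          _ ≤ d i := hik' ▸ hd (le_of_lt hk'k)
  refine ⟨σ, fun τ' => le_trans ?_ (hτopt τ'), hlatem⟩
  have h2 : weightLate p d w τ = ∑ i ∈ Finset.univ \ O, w i := by
    unfold weightLate
    congr 1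
    ext i
    simp only [Finset.mem_filter, Finset.mem_univ, true_and, Finset.mem_sdiff, hO, not_le]
  have h1 : weightLate p d w σ ≤ ∑ i ∈ Finset.univ \ E', w i := by
    unfold weightLate
    apply Finset.sum_le_sum_of_subset
    intro x hx
    simp only [Finset.mem_filter, Finset.mem_univ, true_and] at hx
    simp only [Finset.mem_sdiff, Finset.mem_univ, true_and]
    exact fun hxE' => absurd (hontime x hxE') (not_le.mpr hx)
  have h3 : Finset.univ \ E' = insert m ((Finset.univ \ O).erase j) := by
    ext x
    constructor
    · intro hx
      rw [Finset.mem_sdiff] at hx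
      have hx2 : x ∉ E' := hx.2
      rw [Finset.mem_insert]
      by_cases h : x = m
      · exact Or.inl h
      · refine Or.inr (Finset.mem_erase.mpr ⟨?_, ?_⟩)
        · exact fun hxj => hx2 (by rw [hE', hxj]; exact Finset.mem_insert_self _ _)
        · rw [Finset.mem_sdiff]
          exact ⟨Finset.mem_univ x, fun hxO =>
            hx2 (by rw [hE']; exact Finset.mem_insert_of_mem (Finset.mem_erase.mpr ⟨h, hxO⟩))⟩
    · intro hx
      rw [Finset.mem_insert] at hx
      rw [Finset.mem_sdiff]
      refine ⟨Finset.mem_univ x, ?_⟩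
      intro hxE'
      rw [hE', Finset.mem_insert] at hxE'
      rcases hx with rfl | hx
      · rcases hxE' with h | h
        · exact hjm h.symm
        · exact (Finset.mem_erase.mp h).1 rfl
      · rw [Finset.mem_erase, Finset.mem_sdiff] at hx
        rcases hxE' with h | h
        · exact hx.1 h
        · exact hx.2.2 (Finset.mem_erase.mp h).2
  calc weightLate p d w σ
      ≤ ∑ i ∈ Finset.univ \ E', w i := h1
    _ = w m + ∑ i ∈ (Finset.univ \ O).erase j, w i := by
        rw [h3, Finset.sum_insert (by
          simp only [Finset.mem_erase, Finset.mem_sdiff, Finset.mem_univ, true_and]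
          exact fun h => h.2 hmO)]
    _ ≤ w j + ∑ i ∈ (Finset.univ \ O).erase j, w i :=
        Nat.add_le_add_right (hpw j m (hmax j hjk)) _
    _ = ∑ i ∈ Finset.univ \ O, w i :=
        Finset.add_sum_erase _ _ (by simp [hjO])
    _ = weightLate p d w τ := h2.symm
end

section
/- (Weighted correctness of the Moore-Hodgson Algorithm, oppositely ordered case) Suppose each job j additionally has a weight w_j ∈ ℕ, the processing times and weights are oppositely ordered (p_i ≤ p_j implies w_i ≥ w_j), and the jobs are indexed in EDD order, i.e., d is monotone nondecreasing. Define the Moore-Hodgson rejected set R recursively as follows: starting from the set S of all jobs, if scheduling the jobs of S in increasing index order leaves some job late, let k ∈ S be the first late job (the smallest j ∈ S with ∑_{i ∈ S, i ≤ j} p_i > d j), reject from S a job m ∈ S with m ≤ k whose processing time p_m is maximum among {i ∈ S : i ≤ k}, and recurse on S \ {m}; stop when no job of S is late. Then the schedule that places the final surviving jobs first in increasing index order, followed by the rejected jobs R in arbitrary order, minimizes the total weight of late jobs ∑_{j late} w_j over all schedules. -/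
section aux
variable {n : ℕ} (p d w : Fin n → ℕ)

def Feasible (T : Finset (Fin n)) : Prop :=
  ∀ j ∈ T, ∑ i ∈ T.filter (· ≤ j), p i ≤ d j

lemma mh_subset {A S : Finset (Fin n)} (h : MooreHodgson p d A S) : S ⊆ A := by
  induction h with
  | done S _ => exact Finset.Subset.refl _
  | step A S' k m _ _ _ _ _ _ _ ih => exact ih.trans (Finset.erase_subset _ _)

lemma mh_feasible {A S : Finset (Fin n)} (h : MooreHodgson p d A S) : Feasible p d S := by
  induction h with
  | done S hontime => exact hontime
  | step _ _ _ _ _ _ _ _ _ _ _ ih => exact ih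

lemma sum_filter_insert_erase (T : Finset (Fin n)) (j m i : Fin n)
    (hjT : j ∉ T) (hji : j ≤ i) :
    ∑ l ∈ (insert j (T.erase m)).filter (· ≤ i), p l
      = p j + ∑ l ∈ ((T.filter (· ≤ i)).erase m), p l := by
  have hset : (insert j (T.erase m)).filter (· ≤ i)
      = insert j ((T.filter (· ≤ i)).erase m) := by
    ext x
    simp only [Finset.mem_filter, Finset.mem_insert, Finset.mem_erase]
    constructor
    · rintro ⟨h1 | ⟨h2, h3⟩, h4⟩
      · exact Or.inl h1
      · exact Or.inr ⟨h2, h3, h4⟩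
    · rintro (rfl | ⟨h2, h3, h4⟩)
      · exact ⟨Or.inl rfl, hji⟩
      · exact ⟨Or.inr ⟨h2, h3⟩, h4⟩
  rw [hset, Finset.sum_insert]
  exact fun hmem => hjT (Finset.mem_filter.1 (Finset.mem_of_mem_erase hmem)).1

lemma mh_opt (hpw : ∀ i j : Fin n, p i ≤ p j → w j ≤ w i) (hd : Monotone d)
    {A S : Finset (Fin n)} (h : MooreHodgson p d A S) :
    ∀ T ⊆ A, Feasible p d T → ∑ j ∈ A \ S, w j ≤ ∑ j ∈ A \ T, w j := by
  induction h with
  | done S _ => intro T _ _; simp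
  | step A S' k m hkS hklate hkfirst hmS hmk hmax hrec ih =>
    intro T hTA hT
    have hS'sub : S' ⊆ A.erase m := mh_subset p d hrec
    have hmS' : m ∉ S' := fun h => (Finset.mem_erase.1 (hS'sub h)).1 rfl
    have hmAS : m ∈ A \ S' := Finset.mem_sdiff.2 ⟨hmS, hmS'⟩
    have hASkey : ∑ j ∈ A \ S', w j = w m + ∑ j ∈ (A.erase m) \ S', w j := by
      rw [← Finset.add_sum_erase _ _ hmAS, Finset.erase_sdiff_comm]
    by_cases hmT : m ∈ T
    · -- exchange argument
      -- find a job j ≤ k, j ∈ A, j ∉ T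
      have hj : ∃ j ∈ A, j ≤ k ∧ j ∉ T := by
        by_contra hcon
        push_neg at hcon
        have hfeq : A.filter (· ≤ k) = T.filter (· ≤ k) := by
          apply Finset.Subset.antisymm
          · intro x hx
            simp only [Finset.mem_filter] at hx ⊢
            exact ⟨hcon x hx.1 hx.2, hx.2⟩
          · intro x hx
            simp only [Finset.mem_filter] at hx ⊢
            exact ⟨hTA hx.1, hx.2⟩
        have hkT : k ∈ T := hcon k hkS le_rfl
        have := hT k hkT
        rw [← hfeq] at this
        omega
      obtain ⟨j, hjA, hjk, hjT⟩ := hj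
      have hjm : j ≠ m := fun h => hjT (h ▸ hmT)
      have hpjm : p j ≤ p m := hmax j hjA hjk
      set T' : Finset (Fin n) := insert j (T.erase m) with hT'def
      have hT'sub : T' ⊆ A.erase m := by
        intro x hx
        rcases Finset.mem_insert.1 hx with rfl | hx'
        · exact Finset.mem_erase.2 ⟨hjm, hjA⟩
        · exact Finset.erase_subset_erase m hTA hx'
      have hT'A : T' ⊆ A := hT'sub.trans (Finset.erase_subset _ _)
      -- feasibility of T'
      have hT'feas : Feasible p d T' := by
        intro i hi
        rcases lt_or_ge i k with hik | hki
        · -- i < k : use hkfirst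
          have hiA : i ∈ A := hT'A hi
          calc ∑ l ∈ T'.filter (· ≤ i), p l
              ≤ ∑ l ∈ A.filter (· ≤ i), p l :=
                Finset.sum_le_sum_of_subset (Finset.filter_subset_filter _ hT'A)
            _ ≤ d i := hkfirst i hiA hik
        · -- k ≤ i
          by_cases hiT : i ∈ T
          · have hji : j ≤ i := hjk.trans hki
            have hmi : m ≤ i := hmk.trans hki
            have hmem : m ∈ T.filter (· ≤ i) := Finset.mem_filter.2 ⟨hmT, hmi⟩
            have e1 := sum_filter_insert_erase p T j m i hjT hji
            rw [← hT'def] at e1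
            have e2 := Finset.add_sum_erase _ p hmem
            have e3 := hT i hiT
            omega
          · -- i ∉ T, so i = j, and k ≤ j ≤ k gives i = j = k
            have hij : i = j := by
              rcases Finset.mem_insert.1 hi with h | h
              · exact h
              · exact absurd (Finset.mem_of_mem_erase h) hiT
            subst hij
            have hik : i = k := le_antisymm hjk hki
            subst hik
            -- here j = k = i, k ∉ T, m < k
            have hmi : m ≠ i := fun h => hiT (h ▸ hmT)
            have hmlt : m < i := lt_of_le_of_ne hmk hmi
            set B : Finset (Fin n) := A.filter (fun x => x < i) with hBdef
            have hmB : m ∈ B := Finset.mem_filter.2 ⟨hmS, hmlt⟩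
            have hBne : B.Nonempty := ⟨m, hmB⟩
            set a : Fin n := B.max' hBne with hadef
            have haB : a ∈ B := B.max'_mem hBne
            have haA : a ∈ A := (Finset.mem_filter.1 haB).1
            have hak : a < i := (Finset.mem_filter.1 haB).2
            have hBeq : A.filter (· ≤ a) = B := by
              ext x
              simp only [Finset.mem_filter, hBdef]
              constructor
              · rintro ⟨h1, h2⟩; exact ⟨h1, lt_of_le_of_lt h2 hak⟩
              · rintro ⟨h1, h2⟩
                exact ⟨h1, B.le_max' x (Finset.mem_filter.2 ⟨h1, h2⟩)⟩
            have hBsum : ∑ l ∈ B, p l ≤ d a := by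
              have := hkfirst a haA hak
              rwa [hBeq] at this
            have e1 := sum_filter_insert_erase p T i m i hiT le_rfl
            rw [← hT'def] at e1
            have hsub2 : (T.filter (· ≤ i)).erase m ⊆ B.erase m := by
              intro x hx
              have h1 := Finset.mem_erase.1 hx
              have h2 := Finset.mem_filter.1 h1.2
              refine Finset.mem_erase.2 ⟨h1.1, Finset.mem_filter.2 ⟨hTA h2.1, ?_⟩⟩
              exact lt_of_le_of_ne h2.2 (fun h => hiT (h ▸ h2.1))
            have e2 : ∑ l ∈ (T.filter (· ≤ i)).erase m, p l ≤ ∑ l ∈ B.erase m, p l :=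
              Finset.sum_le_sum_of_subset hsub2
            have e3 := Finset.add_sum_erase _ p hmB
            have hpk : p i ≤ p m := hmax i hkS le_rfl
            have hda : d a ≤ d i := hd hak.le
            omega
      have hihT' := ih T' hT'sub hT'feas
      -- bookkeeping
      have hjAT : j ∈ A \ T := Finset.mem_sdiff.2 ⟨hjA, hjT⟩
      have hsdiff : (A.erase m) \ T' = (A \ T).erase j := by
        ext x
        simp only [Finset.mem_sdiff, Finset.mem_erase, hT'def, Finset.mem_insert,
          not_or, not_and]
        constructor
        · rintro ⟨⟨hxm, hxA⟩, hxj, hxTm⟩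
          exact ⟨hxj, hxA, fun hxT => (hxTm hxm) hxT⟩
        · rintro ⟨hxj, hxA, hxT⟩
          exact ⟨⟨fun h => hxT (h ▸ hmT), hxA⟩, hxj, fun _ h => hxT h⟩
      have hATkey : ∑ x ∈ A \ T, w x = w j + ∑ x ∈ (A.erase m) \ T', w x := by
        rw [hsdiff, Finset.add_sum_erase _ _ hjAT]
      have hwmj : w m ≤ w j := hpw j m hpjm
      omega
    · -- m ∉ T : recurse directly
      have hTsub : T ⊆ A.erase m := fun x hx =>
        Finset.mem_erase.2 ⟨fun h => hmT (h ▸ hx), hTA hx⟩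
      have hihT := ih T hTsub hT
      have hmAT : m ∈ A \ T := Finset.mem_sdiff.2 ⟨hmS, hmT⟩
      have hATkey : ∑ x ∈ A \ T, w x = w m + ∑ x ∈ (A.erase m) \ T, w x := by
        rw [← Finset.add_sum_erase _ _ hmAT, Finset.erase_sdiff_comm]
      omega

end aux

/-- Weighted correctness of the Moore-Hodgson Algorithm (oppositely ordered
case): if processing times and weights are oppositely ordered and the jobs are
in EDD order, then any schedule that places the surviving jobs `S` of the
algorithm first, in increasing index order, followed by the rejected jobs in
arbitrary order, minimizes the total weight of late jobs over all schedules. -/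
theorem mooreHodgson_weighted_correct {n : ℕ} (p d w : Fin n → ℕ)
    (hpw : ∀ i j : Fin n, p i ≤ p j → w j ≤ w i)
    (hd : Monotone d)
    (S : Finset (Fin n)) (hS : MooreHodgson p d Finset.univ S) :
    ∀ σ : Equiv.Perm (Fin n),
      (∀ i ∈ S, ∀ j : Fin n, j ∉ S → σ.symm i < σ.symm j) →
      (∀ i ∈ S, ∀ j ∈ S, i < j → σ.symm i < σ.symm j) →
      ∀ τ : Equiv.Perm (Fin n), weightLate p d w σ ≤ weightLate p d w τ := by
  intro σ hout hord τ
  have hSfeas := mh_feasible p d hS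
  have hσ : weightLate p d w σ ≤ ∑ j ∈ Finset.univ \ S, w j := by
    apply Finset.sum_le_sum_of_subset
    intro j hj
    simp only [Finset.mem_filter, Finset.mem_univ, true_and] at hj
    rw [Finset.mem_sdiff]
    refine ⟨Finset.mem_univ j, fun hjS => ?_⟩
    have hset : Finset.univ.filter (fun i => σ.symm i ≤ σ.symm j) = S.filter (· ≤ j) := by
      ext i
      simp only [Finset.mem_filter, Finset.mem_univ, true_and]
      constructor
      · intro hle
        by_cases hiS : i ∈ S
        · refine ⟨hiS, ?_⟩
          by_contra hji
          push_neg at hji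
          exact absurd hle (not_le.2 (hord j hjS i hiS hji))
        · exact absurd hle (not_le.2 (hout j hjS i hiS))
      · rintro ⟨hiS, hij⟩
        rcases eq_or_lt_of_le hij with rfl | hlt
        · exact le_rfl
        · exact (hord i hiS j hjS hlt).le
    have hfj := hSfeas j hjS
    simp only [completion] at hj
    rw [hset] at hj
    omega
  set T : Finset (Fin n) := Finset.univ.filter (fun j => completion p τ j ≤ d j) with hTdef
  have hTfeas : Feasible p d T := by
    intro j hjT
    have hM : j ∈ T.filter (· ≤ j) := Finset.mem_filter.2 ⟨hjT, le_rfl⟩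
    obtain ⟨b, hbM, hbmax⟩ :=
      Finset.exists_max_image (T.filter (· ≤ j)) (fun x => τ.symm x) ⟨j, hM⟩
    have hbT : b ∈ T := (Finset.mem_filter.1 hbM).1
    have hbj : b ≤ j := (Finset.mem_filter.1 hbM).2
    rw [hTdef] at hbT
    have hbd : completion p τ b ≤ d b := (Finset.mem_filter.1 hbT).2
    have hsub : T.filter (· ≤ j) ⊆ Finset.univ.filter (fun i => τ.symm i ≤ τ.symm b) := by
      intro x hx
      exact Finset.mem_filter.2 ⟨Finset.mem_univ x, hbmax x hx⟩
    calc ∑ i ∈ T.filter (· ≤ j), p i ≤ completion p τ b :=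
          Finset.sum_le_sum_of_subset hsub
      _ ≤ d b := hbd
      _ ≤ d j := hd hbj
  have hτ : weightLate p d w τ = ∑ j ∈ Finset.univ \ T, w j := by
    unfold weightLate
    congr 1
    ext j
    simp only [hTdef, Finset.mem_filter, Finset.mem_univ, true_and, Finset.mem_sdiff, not_le]
  have hopt := mh_opt p d w hpw hd hS T (Finset.subset_univ T) hTfeas
  calc weightLate p d w σ ≤ ∑ j ∈ Finset.univ \ S, w j := hσ
    _ ≤ ∑ j ∈ Finset.univ \ T, w j := hopt
    _ = weightLate p d w τ := hτ.symm
end
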